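/- If p and p' are strongly q-avoiding permutations (of lengths n and m respectively), then their direct sum p ⊕ p' is a strongly q-avoiding permutation of length n+m, provided q is indecomposable. Consequently Sav_n(q) · Sav_m(q) ≤ Sav_{n+m}(q) for an indecomposable pattern q. -/
import Mathlib


def PatternContains {n k : ℕ} (p : Equiv.Perm (Fin n)) (q : Equiv.Perm (Fin k)) : Prop :=
  ∃ f : Fin k → Fin n, StrictMono f ∧ ∀ r s : Fin k, q r < q s ↔ p (f r) < p (f s)

def PatternAvoids {n k : ℕ} (p : Equiv.Perm (Fin n)) (q : Equiv.Perm (Fin k)) : Prop :=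
  ¬ PatternContains p q

def StronglyAvoids {n k : ℕ} (p : Equiv.Perm (Fin n)) (q : Equiv.Perm (Fin k)) : Prop :=
  PatternAvoids p q ∧ PatternAvoids (p * p) q

/-- Direct sum of permutations. -/
def permDirectSum {a b : ℕ} (p : Equiv.Perm (Fin a)) (q : Equiv.Perm (Fin b)) :
    Equiv.Perm (Fin (a + b)) :=
  finSumFinEquiv.symm.trans ((Equiv.sumCongr p q).trans finSumFinEquiv)

/-- A pattern is indecomposable if it cannot be cut so that everything before the cut
is smaller than everything after it. -/
def Indecomposable {k : ℕ} (q : Equiv.Perm (Fin k)) : Prop :=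
  ¬ ∃ j : ℕ, 1 ≤ j ∧ j < k ∧ ∀ a b : Fin k, (a : ℕ) < j → j ≤ (b : ℕ) → q a < q b

noncomputable def SavQ {k : ℕ} (q : Equiv.Perm (Fin k)) (n : ℕ) : ℕ :=
  Nat.card {p : Equiv.Perm (Fin n) // StronglyAvoids p q}

lemma pds_castAdd {a b : ℕ} (p : Equiv.Perm (Fin a)) (q : Equiv.Perm (Fin b)) (i : Fin a) :
    permDirectSum p q (Fin.castAdd b i) = Fin.castAdd b (p i) := by
  simp [permDirectSum]

lemma pds_natAdd {a b : ℕ} (p : Equiv.Perm (Fin a)) (q : Equiv.Perm (Fin b)) (i : Fin b) :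
    permDirectSum p q (Fin.natAdd a i) = Fin.natAdd a (q i) := by
  simp [permDirectSum]

lemma pds_mul {a b : ℕ} (p r : Equiv.Perm (Fin a)) (p' s : Equiv.Perm (Fin b)) :
    permDirectSum p p' * permDirectSum r s = permDirectSum (p * r) (p' * s) := by
  ext i
  refine Fin.addCases (fun i => ?_) (fun i => ?_) i <;>
    simp [Equiv.Perm.mul_apply, pds_castAdd, pds_natAdd]

lemma pds_val_lt {a b : ℕ} (p : Equiv.Perm (Fin a)) (q : Equiv.Perm (Fin b))
    {i : Fin (a + b)} (h : (i : ℕ) < a) : ((permDirectSum p q) i : ℕ) < a := by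
  have e : i = Fin.castAdd b ⟨i, h⟩ := Fin.ext rfl
  rw [e, pds_castAdd]
  exact (p ⟨i, h⟩).isLt

lemma pds_val_ge {a b : ℕ} (p : Equiv.Perm (Fin a)) (q : Equiv.Perm (Fin b))
    {i : Fin (a + b)} (h : a ≤ (i : ℕ)) : a ≤ ((permDirectSum p q) i : ℕ) := by
  have hb : (i : ℕ) - a < b := by have := i.isLt; omega
  have e : i = Fin.natAdd a ⟨(i : ℕ) - a, hb⟩ := Fin.ext (by simp; omega)
  rw [e, pds_natAdd]
  simp

lemma pds_contains {n m k : ℕ} {p : Equiv.Perm (Fin n)} {p' : Equiv.Perm (Fin m)}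
    {q : Equiv.Perm (Fin k)} (hq : Indecomposable q)
    (h : PatternContains (permDirectSum p p') q) :
    PatternContains p q ∨ PatternContains p' q := by
  classical
  obtain ⟨f, hmono, hpat⟩ := h
  rcases Nat.eq_zero_or_pos k with hk | hk
  · subst hk
    exact Or.inl ⟨Fin.elim0, fun a => a.elim0, fun a => a.elim0⟩
  by_cases hall : ∀ r : Fin k, (f r : ℕ) < n
  · left
    have hv : ∀ r, ((permDirectSum p p') (f r) : ℕ) = (p ⟨(f r : ℕ), hall r⟩ : ℕ) := by
      intro r
      have e : f r = Fin.castAdd m ⟨(f r : ℕ), hall r⟩ := Fin.ext rfl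
      have e2 : ((permDirectSum p p') (f r) : ℕ)
          = ((permDirectSum p p') (Fin.castAdd m ⟨(f r : ℕ), hall r⟩) : ℕ) :=
        congrArg (fun x => ((permDirectSum p p') x : ℕ)) e
      rw [pds_castAdd] at e2
      exact e2
    refine ⟨fun r => ⟨(f r : ℕ), hall r⟩, fun r s hrs => hmono hrs, fun r s => ?_⟩
    show q r < q s ↔ p ⟨(f r : ℕ), hall r⟩ < p ⟨(f s : ℕ), hall s⟩
    rw [hpat r s, Fin.lt_def, Fin.lt_def, hv r, hv s]
  by_cases hall' : ∀ r : Fin k, n ≤ (f r : ℕ)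
  · right
    have hb : ∀ r : Fin k, (f r : ℕ) - n < m := fun r => by
      have h1 := (f r).isLt
      have h2 := hall' r
      omega
    have hv : ∀ r, ((permDirectSum p p') (f r) : ℕ)
        = n + (p' ⟨(f r : ℕ) - n, hb r⟩ : ℕ) := by
      intro r
      have e : f r = Fin.natAdd n ⟨(f r : ℕ) - n, hb r⟩ := by
        apply Fin.ext
        have := hall' r
        simp only [Fin.natAdd_mk]
        omega
      have e2 : ((permDirectSum p p') (f r) : ℕ)
          = ((permDirectSum p p') (Fin.natAdd n ⟨(f r : ℕ) - n, hb r⟩) : ℕ) :=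
        congrArg (fun x => ((permDirectSum p p') x : ℕ)) e
      rw [pds_natAdd] at e2
      exact e2
    refine ⟨fun r => ⟨(f r : ℕ) - n, hb r⟩, fun r s hrs => ?_, fun r s => ?_⟩
    · have h1 : (f r : ℕ) < (f s : ℕ) := hmono hrs
      have h2 := hall' r
      show (f r : ℕ) - n < (f s : ℕ) - n
      omega
    · show q r < q s ↔ p' ⟨(f r : ℕ) - n, hb r⟩ < p' ⟨(f s : ℕ) - n, hb s⟩
      rw [hpat r s, Fin.lt_def, Fin.lt_def, hv r, hv s]
      constructor <;> intro <;> omega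
  · exfalso
    push_neg at hall hall'
    obtain ⟨s₀, hs₀⟩ := hall
    obtain ⟨r₀, hr₀⟩ := hall'
    have hQ : ∃ t : ℕ, ∃ ht : t < k, n ≤ (f ⟨t, ht⟩ : ℕ) := ⟨s₀, s₀.isLt, hs₀⟩
    obtain ⟨hjk, hjn⟩ := Nat.find_spec hQ
    have hj1 : 1 ≤ Nat.find hQ := by
      by_contra hc
      have hj0 : Nat.find hQ = 0 := by omega
      have hle : f ⟨Nat.find hQ, hjk⟩ ≤ f r₀ := by
        apply hmono.monotone
        show Nat.find hQ ≤ (r₀ : ℕ)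
        omega
      have hle' : (f ⟨Nat.find hQ, hjk⟩ : ℕ) ≤ (f r₀ : ℕ) := hle
      omega
    refine hq ⟨Nat.find hQ, hj1, hjk, fun a b ha hb => ?_⟩
    have hfa : (f a : ℕ) < n := by
      have h1 := Nat.find_min hQ (m := (a : ℕ)) ha
      push_neg at h1
      have h2 := h1 a.isLt
      simpa using h2
    have hfb : n ≤ (f b : ℕ) := by
      have hle : f ⟨Nat.find hQ, hjk⟩ ≤ f b := by
        apply hmono.monotone
        exact hb
      have hle' : (f ⟨Nat.find hQ, hjk⟩ : ℕ) ≤ (f b : ℕ) := hle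
      omega
    refine (hpat a b).mpr ?_
    show ((permDirectSum p p') (f a) : ℕ) < ((permDirectSum p p') (f b) : ℕ)
    have h1 := pds_val_lt p p' hfa
    have h2 := pds_val_ge p p' hfb
    omega

lemma pds_strong {n m k : ℕ} (q : Equiv.Perm (Fin k)) (hq : Indecomposable q)
    (p : Equiv.Perm (Fin n)) (p' : Equiv.Perm (Fin m))
    (hp : StronglyAvoids p q) (hp' : StronglyAvoids p' q) :
    StronglyAvoids (permDirectSum p p') q := by
  constructor
  · intro hc
    rcases pds_contains hq hc with h | h
    exacts [hp.1 h, hp'.1 h]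
  · intro hc
    rw [pds_mul] at hc
    rcases pds_contains hq hc with h | h
    exacts [hp.2 h, hp'.2 h]

theorem directSum_strongly_avoids {k : ℕ} (q : Equiv.Perm (Fin k))
    (hq : Indecomposable q) :
    (∀ (n m : ℕ) (p : Equiv.Perm (Fin n)) (p' : Equiv.Perm (Fin m)),
      StronglyAvoids p q → StronglyAvoids p' q →
        StronglyAvoids (permDirectSum p p') q) ∧
    ∀ n m : ℕ, SavQ q n * SavQ q m ≤ SavQ q (n + m) := by
  refine ⟨fun n m p p' hp hp' => pds_strong q hq p p' hp hp', fun n m => ?_⟩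
  classical
  let F : {p : Equiv.Perm (Fin n) // StronglyAvoids p q} ×
      {p' : Equiv.Perm (Fin m) // StronglyAvoids p' q} →
      {P : Equiv.Perm (Fin (n + m)) // StronglyAvoids P q} :=
    fun x => ⟨permDirectSum x.1.1 x.2.1, pds_strong q hq _ _ x.1.2 x.2.2⟩
  have hF : Function.Injective F := by
    rintro ⟨⟨p, hp⟩, ⟨p', hp'⟩⟩ ⟨⟨r, hr⟩, ⟨r', hr'⟩⟩ h
    have h0 : permDirectSum p p' = permDirectSum r r' := congrArg Subtype.val h
    simp only [Prod.mk.injEq, Subtype.mk.injEq]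
    constructor
    · ext i
      have h1 : permDirectSum p p' (Fin.castAdd m i) = permDirectSum r r' (Fin.castAdd m i) := by
        rw [h0]
      rw [pds_castAdd, pds_castAdd] at h1
      have h2 := congrArg Fin.val h1
      exact h2
    · ext i
      have h1 : permDirectSum p p' (Fin.natAdd n i) = permDirectSum r r' (Fin.natAdd n i) := by
        rw [h0]
      rw [pds_natAdd, pds_natAdd] at h1
      have h2 : n + (p' i : ℕ) = n + (r' i : ℕ) := congrArg Fin.val h1
      omega
  calc SavQ q n * SavQ q m
      = Nat.card ({p : Equiv.Perm (Fin n) // StronglyAvoids p q} ×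
        {p' : Equiv.Perm (Fin m) // StronglyAvoids p' q}) := (Nat.card_prod _ _).symm
    _ ≤ SavQ q (n + m) := Nat.card_le_card_of_injective F hF
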